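/- Let k ≥ 1 be an integer, a > 0 with a + k/2 > 1 when k = 1 and any a > 0 when k ≥ 2, b > 0, and n, p, q with a + (n−p)/2 − q/2 > 1/2 and a + n/2 − p/2 − q/2 + k/2 > 1. Then the double integral ∫_0^∞ ∫_0^∞ exp(−τ/b) exp(−s/b) s^{k/2 + a − 1} τ^{a + n/2 − p/2 − q/2 − 2} (1 + (s/τ)^k)^{−1/2} dτ ds is finite. -/

import Mathlib

/-!
Since `(1 + x)^(-1/2) ≤ x^(-1/2)`, the factor coupling the two variables is at most
`(s / τ)^(-k/2)`. This splits the integrand into `(e^(-s/b) s^(a-1)) · (e^(-τ/b) τ^θ)` with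
`θ = a + n/2 - p/2 - q/2 + k/2 - 2 > -1`, a product of two convergent gamma integrals.
-/

open MeasureTheory Set
open scoped ENNReal NNReal

lemma lintegral_exp_neg_div_mul_rpow_lt_top {b r : ℝ} (hb : 0 < b) (hr : -1 < r) :
    ∫⁻ x in Ioi (0 : ℝ), ENNReal.ofReal (Real.exp (-x / b) * x ^ r) < ⊤ := by
  have hI : IntegrableOn (fun x : ℝ => x ^ r * Real.exp (-(1 / b) * x ^ (1 : ℝ))) (Ioi 0) :=
    integrableOn_rpow_mul_exp_neg_mul_rpow hr zero_lt_one (by positivity)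
  refine lt_of_eq_of_lt (setLIntegral_congr_fun measurableSet_Ioi fun x _ => ?_)
    hI.setLIntegral_lt_top
  rw [Real.rpow_one, mul_comm, neg_mul, one_div_mul_eq_div, neg_div]

/-- `f` is `ℝ≥0`-valued so that `f x` can be pulled out of the inner integral without any
measurability assumption (`lintegral_const_mul'`). -/
lemma lintegral_lintegral_lt_top_of_le_mul {α β : Type*} [MeasurableSpace α] [MeasurableSpace β]
    {μ : Measure α} {ν : Measure β} {F : α → β → ℝ≥0∞} {f : α → ℝ≥0} {g : β → ℝ≥0∞}
    (hF : ∀ᵐ x ∂μ, ∀ᵐ y ∂ν, F x y ≤ f x * g y)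
    (hf : ∫⁻ x, f x ∂μ < ⊤) (hg : ∫⁻ y, g y ∂ν < ⊤) :
    ∫⁻ x, ∫⁻ y, F x y ∂ν ∂μ < ⊤ :=
  calc ∫⁻ x, ∫⁻ y, F x y ∂ν ∂μ
      ≤ ∫⁻ x, f x * ∫⁻ y, g y ∂ν ∂μ := lintegral_mono_ae <| hF.mono fun _ hx =>
        (lintegral_mono_ae hx).trans_eq (lintegral_const_mul' _ _ ENNReal.coe_ne_top)
    _ = (∫⁻ x, f x ∂μ) * ∫⁻ y, g y ∂ν := lintegral_mul_const' _ _ hg.ne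
    _ < ⊤ := ENNReal.mul_lt_top hf hg

lemma one_add_div_pow_rpow_neg_half_le {s τ : ℝ} (hs : 0 < s) (hτ : 0 < τ) (k : ℕ) :
    (1 + (s / τ) ^ k) ^ (-(1 : ℝ) / 2) ≤ s ^ (-(k : ℝ) / 2) * τ ^ ((k : ℝ) / 2) := by
  have hst : 0 < s / τ := div_pos hs hτ
  calc (1 + (s / τ) ^ k) ^ (-(1 : ℝ) / 2)
      ≤ ((s / τ) ^ k) ^ (-(1 : ℝ) / 2) :=
        Real.rpow_le_rpow_of_nonpos (pow_pos hst k) (le_add_of_nonneg_left zero_le_one)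
          (by norm_num)
    _ = s ^ (-(k : ℝ) / 2) * τ ^ ((k : ℝ) / 2) := by
        rw [← Real.rpow_natCast, ← Real.rpow_mul hst.le, Real.div_rpow hs.le hτ.le,
          show (k : ℝ) * (-(1 : ℝ) / 2) = -((k : ℝ) / 2) by ring, Real.rpow_neg hτ.le,
          div_inv_eq_mul, neg_div]

lemma exp_mul_rpow_mul_one_add_div_pow_le {s τ : ℝ} (hs : 0 < s) (hτ : 0 < τ) (k : ℕ)
    (a b β : ℝ) :
    Real.exp (-τ / b) * Real.exp (-s / b) * s ^ ((k : ℝ) / 2 + a - 1) * τ ^ β *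
        (1 + (s / τ) ^ k) ^ (-(1 : ℝ) / 2)
      ≤ (Real.exp (-s / b) * s ^ (a - 1)) * (Real.exp (-τ / b) * τ ^ (β + (k : ℝ) / 2)) :=
  calc Real.exp (-τ / b) * Real.exp (-s / b) * s ^ ((k : ℝ) / 2 + a - 1) * τ ^ β *
        (1 + (s / τ) ^ k) ^ (-(1 : ℝ) / 2)
      ≤ Real.exp (-τ / b) * Real.exp (-s / b) * s ^ ((k : ℝ) / 2 + a - 1) * τ ^ β *
          (s ^ (-(k : ℝ) / 2) * τ ^ ((k : ℝ) / 2)) := by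
        gcongr
        exact one_add_div_pow_rpow_neg_half_le hs hτ k
    _ = (Real.exp (-s / b) * (s ^ ((k : ℝ) / 2 + a - 1) * s ^ (-(k : ℝ) / 2))) *
          (Real.exp (-τ / b) * (τ ^ β * τ ^ ((k : ℝ) / 2))) := by ring
    _ = (Real.exp (-s / b) * s ^ (a - 1)) * (Real.exp (-τ / b) * τ ^ (β + (k : ℝ) / 2)) := by
        rw [← Real.rpow_add hs, ← Real.rpow_add hτ,
          show (k : ℝ) / 2 + a - 1 + -(k : ℝ) / 2 = a - 1 by ring]

theorem rsr_double_integral_finite_general (k : ℕ)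
    (a b : ℝ) (ha : 0 < a) (hb : 0 < b) (n p q : ℕ)
    (h2 : 1 < a + (n : ℝ) / 2 - (p : ℝ) / 2 - (q : ℝ) / 2 + (k : ℝ) / 2) :
    (∫⁻ s in Ioi (0 : ℝ), ∫⁻ τ in Ioi (0 : ℝ),
      ENNReal.ofReal (Real.exp (-τ / b) * Real.exp (-s / b) *
        s ^ ((k : ℝ) / 2 + a - 1) *
        τ ^ (a + (n : ℝ) / 2 - (p : ℝ) / 2 - (q : ℝ) / 2 - 2) *
        (1 + (s / τ) ^ k) ^ (-(1 : ℝ) / 2))) < ⊤ := by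
  set β : ℝ := a + (n : ℝ) / 2 - (p : ℝ) / 2 - (q : ℝ) / 2 - 2 with hβ
  refine lintegral_lintegral_lt_top_of_le_mul
    (f := fun s => (Real.exp (-s / b) * s ^ (a - 1)).toNNReal)
    (g := fun τ => ENNReal.ofReal (Real.exp (-τ / b) * τ ^ (β + (k : ℝ) / 2))) ?_
    (lintegral_exp_neg_div_mul_rpow_lt_top hb (by linarith))
    (lintegral_exp_neg_div_mul_rpow_lt_top hb (by linarith [hβ]))
  filter_upwards [ae_restrict_mem measurableSet_Ioi] with s (hs : 0 < s)
  filter_upwards [ae_restrict_mem measurableSet_Ioi] with τ (hτ : 0 < τ)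
  rw [← ENNReal.ofReal, ← ENNReal.ofReal_mul (by positivity)]
  exact ENNReal.ofReal_le_ofReal (exp_mul_rpow_mul_one_add_div_pow_le hs hτ k a b β)

/-- The key integrability estimate underlying the existence of the posterior
mean and variance in Restricted Spatial Regression models. -/
theorem rsr_double_integral_finite (k : ℕ) (hk : 1 ≤ k)
    (a b : ℝ) (ha : 0 < a) (hb : 0 < b) (n p q : ℕ)
    (hk1 : k = 1 → 1 < a + (k : ℝ) / 2)
    (h1 : 1 / 2 < a + ((n : ℝ) - (p : ℝ)) / 2 - (q : ℝ) / 2)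
    (h2 : 1 < a + (n : ℝ) / 2 - (p : ℝ) / 2 - (q : ℝ) / 2 + (k : ℝ) / 2) :
    (∫⁻ s in Ioi (0 : ℝ), ∫⁻ τ in Ioi (0 : ℝ),
      ENNReal.ofReal (Real.exp (-τ / b) * Real.exp (-s / b) *
        s ^ ((k : ℝ) / 2 + a - 1) *
        τ ^ (a + (n : ℝ) / 2 - (p : ℝ) / 2 - (q : ℝ) / 2 - 2) *
        (1 + (s / τ) ^ k) ^ (-(1 : ℝ) / 2))) < ⊤ :=
  rsr_double_integral_finite_general k a b ha hb n p q h2
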